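/- Let n ≥ 4, let C be a totally traceless generalized curvature tensor on Minkowski space ℝ^n, let u be a unit timelike vector such that C is Weyl compatible with u, and let Γ be the associated tensor built from C, its electric part E, u and η. Then Γ is itself a generalized curvature tensor: Γ(x,y,z,w) = −Γ(y,x,z,w) = −Γ(x,y,w,z), Γ(x,y,z,w) = Γ(z,w,x,y), and Γ(x,y,z,w) + Γ(y,z,x,w) + Γ(z,x,y,w) = 0 for all x,y,z,w. -/

import Mathlib

open Finset

noncomputable section

/-- A 4-argument real tensor on `ℝ^n`. -/
abbrev Tensor4 (n : ℕ) :=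
  (Fin n → ℝ) → (Fin n → ℝ) → (Fin n → ℝ) → (Fin n → ℝ) → ℝ

/-- Components of the Minkowski metric `diag(-1,1,…,1)` of signature `(-,+,…,+)`.
Since this matrix is its own inverse, it also gives the components `η^{ab}`
of the inverse metric. -/
def ηm {n : ℕ} (a b : Fin n) : ℝ :=
  if a = b then (if (a : ℕ) = 0 then -1 else 1) else 0

/-- The Minkowski bilinear form `η` of signature `(-,+,…,+)` on `ℝ^n`. -/
def ηf {n : ℕ} (x y : Fin n → ℝ) : ℝ :=
  ∑ i : Fin n, (if (i : ℕ) = 0 then (-1 : ℝ) else 1) * x i * y i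

/-- The standard basis `(e_a)` of `ℝ^n`. -/
def stdb {n : ℕ} (a : Fin n) : Fin n → ℝ := fun i => if i = a then 1 else 0

/-- Multilinearity of a 4-argument map. -/
def Multilinear4 {n : ℕ} (C : Tensor4 n) : Prop :=
  (∀ y z w, IsLinearMap ℝ fun x => C x y z w) ∧
  (∀ x z w, IsLinearMap ℝ fun y => C x y z w) ∧
  (∀ x y w, IsLinearMap ℝ fun z => C x y z w) ∧
  (∀ x y z, IsLinearMap ℝ fun w => C x y z w)

/-- Bilinearity of a 2-argument map. -/
def Bilinear2 {n : ℕ} (S : (Fin n → ℝ) → (Fin n → ℝ) → ℝ) : Prop :=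
  (∀ y, IsLinearMap ℝ fun x => S x y) ∧ (∀ x, IsLinearMap ℝ fun y => S x y)

/-- A generalized curvature tensor: a multilinear map with the algebraic
symmetries of the Riemann tensor (antisymmetry in the first and the last pair,
pair-exchange symmetry, and the first Bianchi identity). -/
def IsGenCurv {n : ℕ} (C : Tensor4 n) : Prop :=
  Multilinear4 C ∧
  (∀ x y z w, C x y z w = - C y x z w) ∧
  (∀ x y z w, C x y z w = - C x y w z) ∧
  (∀ x y z w, C x y z w = C z w x y) ∧
  (∀ x y z w, C x y z w + C y z x w + C z x y w = 0)

/-- Total tracelessness: `Σ_{a,b} η^{ab} C(e_a, x, e_b, y) = 0`. -/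
def TotallyTraceless {n : ℕ} (C : Tensor4 n) : Prop :=
  ∀ x y, (∑ a, ∑ b, ηm a b * C (stdb a) x (stdb b) y) = 0

/-- Weyl compatibility of `C` with the vector `u`. -/
def WeylCompatible {n : ℕ} (C : Tensor4 n) (u : Fin n → ℝ) : Prop :=
  ∀ x y z w,
    ηf u x * C y z w u + ηf u y * C z x w u + ηf u z * C x y w u = 0

/-- The electric part of `C` relative to `u`: `E(x,y) = C(u,x,y,u)`. -/
def electric {n : ℕ} (C : Tensor4 n) (u : Fin n → ℝ)
    (x y : Fin n → ℝ) : ℝ :=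
  C u x y u

/-- Full η-self-contraction `T² = Σ T_{abcd} T^{abcd}` of a 4-tensor. -/
def sq4 {n : ℕ} (T : Tensor4 n) : ℝ :=
  ∑ a, ∑ a', ∑ b, ∑ b', ∑ c, ∑ c', ∑ d, ∑ d',
    ηm a a' * ηm b b' * ηm c c' * ηm d d' *
      T (stdb a) (stdb b) (stdb c) (stdb d) *
      T (stdb a') (stdb b') (stdb c') (stdb d')

/-- Full η-self-contraction `S² = Σ S_{ab} S^{ab}` of a 2-tensor. -/
def sq2 {n : ℕ} (S : (Fin n → ℝ) → (Fin n → ℝ) → ℝ) : ℝ :=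
  ∑ a, ∑ a', ∑ b, ∑ b',
    ηm a a' * ηm b b' * S (stdb a) (stdb b) * S (stdb a') (stdb b')

/-- The tensor `Γ` associated with `C`, its electric part `E`, `u` and `η`. -/
def Γt {n : ℕ} (C : Tensor4 n) (u : Fin n → ℝ) : Tensor4 n :=
  fun x y z w =>
    C x y z w
      - ((n : ℝ) - 2) / ((n : ℝ) - 3) *
          (ηf u x * ηf u w * electric C u y z - ηf u y * ηf u w * electric C u x z
            - ηf u x * ηf u z * electric C u y w + ηf u y * ηf u z * electric C u x w)
      - 1 / ((n : ℝ) - 3) *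
          (ηf x w * electric C u y z - ηf y w * electric C u x z
            - ηf x z * electric C u y w + ηf y z * electric C u x w)

/-!
`E` is symmetric, so the two brackets in `Γ` are the Kulkarni–Nomizu products `U ⊙ E` and `η ⊙ E`,
where `U(x, y) = η(u, x) η(u, y)`. A Kulkarni–Nomizu product of symmetric bilinear forms is always a
generalized curvature tensor, and these form a vector space, so `Γ = C - a (U ⊙ E) - b (η ⊙ E)` is one.
-/

namespace IsLinearMap

variable {M : Type*} [AddCommMonoid M] [Module ℝ M] {f g : M → ℝ}

lemma add (hf : IsLinearMap ℝ f) (hg : IsLinearMap ℝ g) : IsLinearMap ℝ fun x => f x + g x :=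
  ⟨fun x y => by rw [hf.map_add, hg.map_add]; ring,
    fun r x => by rw [hf.map_smul, hg.map_smul, smul_eq_mul, smul_eq_mul, smul_eq_mul]; ring⟩

lemma const_mul (c : ℝ) (hf : IsLinearMap ℝ f) : IsLinearMap ℝ fun x => c * f x :=
  ⟨fun x y => by rw [hf.map_add]; ring,
    fun r x => by rw [hf.map_smul, smul_eq_mul, smul_eq_mul]; ring⟩

lemma mul_const (c : ℝ) (hf : IsLinearMap ℝ f) : IsLinearMap ℝ fun x => f x * c := by
  simpa only [mul_comm c] using hf.const_mul c

lemma sub (hf : IsLinearMap ℝ f) (hg : IsLinearMap ℝ g) : IsLinearMap ℝ fun x => f x - g x := by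
  simpa only [sub_eq_add_neg, neg_one_mul] using hf.add (hg.const_mul (-1))

end IsLinearMap

section

variable {n : ℕ}

namespace IsGenCurv

/-- Antisymmetry in the first pair and pair exchange already give antisymmetry in the last pair and
transport linearity from the first slot to the other three. -/
lemma of_linear_left {T : Tensor4 n} (hlin : ∀ y z w, IsLinearMap ℝ fun x => T x y z w)
    (hanti : ∀ x y z w, T x y z w = -T y x z w) (hpair : ∀ x y z w, T x y z w = T z w x y)
    (hbianchi : ∀ x y z w, T x y z w + T y z x w + T z x y w = 0) : IsGenCurv T := by
  have hanti' : ∀ x y z w, T x y z w = -T x y w z := fun x y z w => by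
    rw [hpair, hanti, hpair w z]
  refine ⟨⟨hlin, fun x z w => ?_, fun x y w => ?_, fun x y z => ?_⟩, hanti, hanti', hpair, hbianchi⟩
  · simpa only [← hanti, neg_one_mul] using (hlin x z w).const_mul (-1)
  · simpa only [← hpair] using hlin w x y
  · simpa only [← hpair, ← hanti', neg_one_mul] using (hlin z x y).const_mul (-1)

lemma sub {T S : Tensor4 n} (hT : IsGenCurv T) (hS : IsGenCurv S) : IsGenCurv (T - S) := by
  obtain ⟨⟨hT₁, -⟩, hTa, -, hTp, hTb⟩ := hT
  obtain ⟨⟨hS₁, -⟩, hSa, -, hSp, hSb⟩ := hS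
  refine of_linear_left (fun y z w => (hT₁ y z w).sub (hS₁ y z w)) (fun x y z w => ?_)
    (fun x y z w => ?_) (fun x y z w => ?_)
  · simp only [Pi.sub_apply, hTa x y, hSa x y]; ring
  · simp only [Pi.sub_apply, hTp x y, hSp x y]
  · simp only [Pi.sub_apply]; linear_combination hTb x y z w - hSb x y z w

lemma smul {T : Tensor4 n} (c : ℝ) (hT : IsGenCurv T) : IsGenCurv (c • T) := by
  obtain ⟨⟨hT₁, -⟩, hTa, -, hTp, hTb⟩ := hT
  refine of_linear_left (fun y z w => (hT₁ y z w).const_mul c) (fun x y z w => ?_)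
    (fun x y z w => ?_) (fun x y z w => ?_)
  · simp only [Pi.smul_apply, smul_eq_mul, hTa x y]; ring
  · simp only [Pi.smul_apply, smul_eq_mul, hTp x y]
  · simp only [Pi.smul_apply, smul_eq_mul]; linear_combination c * hTb x y z w

end IsGenCurv

def kulkarniNomizu (h k : (Fin n → ℝ) → (Fin n → ℝ) → ℝ) : Tensor4 n :=
  fun x y z w => h x w * k y z + h y z * k x w - h x z * k y w - h y w * k x z

lemma isGenCurv_kulkarniNomizu {h k : (Fin n → ℝ) → (Fin n → ℝ) → ℝ}
    (hh : Bilinear2 h) (hk : Bilinear2 k) (hhs : ∀ x y, h x y = h y x)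
    (hks : ∀ x y, k x y = k y x) : IsGenCurv (kulkarniNomizu h k) := by
  refine IsGenCurv.of_linear_left (fun y z w => ?_) (fun x y z w => ?_) (fun x y z w => ?_)
    (fun x y z w => ?_) <;> unfold kulkarniNomizu
  · exact ((((hh.1 w).mul_const (k y z)).add ((hk.1 w).const_mul (h y z))).sub
      ((hh.1 z).mul_const (k y w))).sub ((hk.1 z).const_mul (h y w))
  · ring
  · rw [hhs z y, hks w x, hhs z x, hks w y, hhs w y, hks z x, hhs w x, hks z y]; ring
  · linear_combination h x w * hks y z + k x w * hhs y z + k y w * hhs z x + h y w * hks z x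
      + k z w * hhs x y + h z w * hks x y

lemma ηf_comm (x y : Fin n → ℝ) : ηf x y = ηf y x :=
  Finset.sum_congr rfl fun _ _ => by ring

lemma bilinear2_ηf : Bilinear2 (ηf (n := n)) := by
  have hright : ∀ x : Fin n → ℝ, IsLinearMap ℝ (ηf x) := fun x =>
    ⟨fun y y' => by
      simp only [ηf, Pi.add_apply, ← Finset.sum_add_distrib]
      exact Finset.sum_congr rfl fun _ _ => by ring,
    fun r y => by
      simp only [ηf, Pi.smul_apply, smul_eq_mul, Finset.mul_sum]
      exact Finset.sum_congr rfl fun _ _ => by ring⟩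
  exact ⟨fun y => by simpa only [ηf_comm _ y] using hright y, hright⟩

lemma bilinear2_mul {f g : (Fin n → ℝ) → ℝ} (hf : IsLinearMap ℝ f) (hg : IsLinearMap ℝ g) :
    Bilinear2 fun x y => f x * g y :=
  ⟨fun y => hf.mul_const (g y), fun x => hg.const_mul (f x)⟩

lemma bilinear2_electric {C : Tensor4 n} (hC : Multilinear4 C) (u : Fin n → ℝ) :
    Bilinear2 (electric C u) :=
  ⟨fun y => hC.2.1 u y u, fun x => hC.2.2.1 u x u⟩

lemma electric_comm {C : Tensor4 n} (hC : IsGenCurv C) (u x y : Fin n → ℝ) :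
    electric C u x y = electric C u y x := by
  obtain ⟨-, hanti, hanti', hpair, -⟩ := hC
  rw [electric, electric, hpair, hanti, hanti', neg_neg]

lemma Γt_eq_sub_kulkarniNomizu (C : Tensor4 n) (u : Fin n → ℝ) :
    Γt C u = C - (((n : ℝ) - 2) / ((n : ℝ) - 3)) •
        kulkarniNomizu (fun x y => ηf u x * ηf u y) (electric C u)
      - (1 / ((n : ℝ) - 3)) • kulkarniNomizu ηf (electric C u) := by
  ext x y z w
  simp only [Γt, kulkarniNomizu, Pi.sub_apply, Pi.smul_apply, smul_eq_mul]
  ring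

end

theorem stmt_8_general {n : ℕ} (C : Tensor4 n)
    (hC : IsGenCurv C)
    (u : Fin n → ℝ) :
    IsGenCurv (Γt C u) := by
  have hE := bilinear2_electric hC.1 u
  have hEs := electric_comm hC u
  have hU : Bilinear2 fun x y => ηf u x * ηf u y :=
    bilinear2_mul (bilinear2_ηf.2 u) (bilinear2_ηf.2 u)
  have hUE := isGenCurv_kulkarniNomizu hU hE (fun x y => mul_comm _ _) hEs
  have hηE := isGenCurv_kulkarniNomizu bilinear2_ηf hE ηf_comm hEs
  rw [Γt_eq_sub_kulkarniNomizu]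
  exact (hC.sub (hUE.smul _)).sub (hηE.smul _)

/-- for `n ≥ 4`, a totally traceless generalized curvature tensor
`C` on Minkowski `ℝ^n` Weyl compatible with a unit timelike `u`, the associated
tensor `Γ` is itself a generalized curvature tensor. -/
theorem stmt_8 {n : ℕ} (hn : 4 ≤ n) (C : Tensor4 n)
    (hC : IsGenCurv C) (htr : TotallyTraceless C)
    (u : Fin n → ℝ) (hu : ηf u u = -1) (hW : WeylCompatible C u) :
    IsGenCurv (Γt C u) :=
  stmt_8_general C hC u
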